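/- Suppose there exist constants c ≥ 0 and θ ∈ (0,1) such that for every bounded Lipschitz function φ : S → ℝ, every n ∈ ℕ and all x, y ∈ S, |∫ φ d(κⁿ(x)) − ∫ φ d(κⁿ(y))| ≤ c·θⁿ·Lip(φ)·d(x,y), and let μ be an invariant probability measure for κ such that ∫ d(x,y) μ(dy) < ∞ for a given x ∈ S. Then for every bounded Lipschitz function φ : S → ℝ and every n ∈ ℕ, |∫ φ d(κⁿ(x)) − ∫ φ dμ| ≤ c·θⁿ·Lip(φ)·∫ d(x,y) μ(dy). -/

import Mathlib

/-! Invariance of `μ` under `κⁿ` gives `∫ φ dμ = ∫ (∫ φ dκⁿ(y)) μ(dy)`, so `∫ φ dκⁿ(x) - ∫ φ dμ`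
is the `μ`-average of `∫ φ dκⁿ(x) - ∫ φ dκⁿ(y)`, and each of these is at most
`c θⁿ Lip(φ) d(x, y)` by the contraction hypothesis. -/

open MeasureTheory ProbabilityTheory

/-- The `n`-fold iterate of a Markov kernel, started at `x`:
`kiter κ 0 x = δ_x` and `kiter κ (n+1) x = (kiter κ n x).bind κ`. -/
noncomputable def kiter {S : Type*} [MeasurableSpace S] (κ : Kernel S S) :
    ℕ → S → Measure S
  | 0, x => Measure.dirac x
  | (n + 1), x => (kiter κ n x).bind (fun y => κ y)

/-- A probability measure `μ` is invariant for the Markov kernel `κ` if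
`∫ κ(x)(A) μ(dx) = μ(A)` for every measurable set `A`. -/
def Invariant {S : Type*} [MeasurableSpace S] (κ : Kernel S S) (μ : Measure S) : Prop :=
  ∀ A : Set S, MeasurableSet A → ∫⁻ x, κ x A ∂μ = μ A

namespace ProbabilityTheory.Kernel

variable {α : Type*} {mα : MeasurableSpace α}

instance isMarkovKernel_pow (κ : Kernel α α) [IsMarkovKernel κ] (n : ℕ) :
    IsMarkovKernel (κ ^ n) := by
  induction n with
  | zero => exact inferInstanceAs (IsMarkovKernel Kernel.id)
  | succ n ih => rw [pow_succ]; exact inferInstanceAs (IsMarkovKernel (_ ∘ₖ _))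

theorem Invariant.pow {κ : Kernel α α} {μ : Measure α} (h : Invariant κ μ) :
    ∀ n : ℕ, Invariant (κ ^ n) μ
  | 0 => Measure.id_comp
  | n + 1 => by rw [pow_succ]; exact (h.pow n).comp h

end ProbabilityTheory.Kernel

namespace MeasureTheory.Measure

variable {α β E : Type*} {mα : MeasurableSpace α} {mβ : MeasurableSpace β}
  [NormedAddCommGroup E] [NormedSpace ℝ E]
  {μ : Measure α} {κ : Kernel α β} {f : β → E}

theorem integral_comp [SFinite μ] [IsSFiniteKernel κ] (hf : Integrable f (κ ∘ₘ μ)) :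
    ∫ z, f z ∂(κ ∘ₘ μ) = ∫ x, ∫ z, f z ∂κ x ∂μ := by
  rw [comp_eq_comp_const_apply] at hf ⊢
  rw [Kernel.integral_comp hf, Kernel.const_apply]

theorem integrable_integral_of_integrable_comp (hf : Integrable f (κ ∘ₘ μ)) :
    Integrable (fun x ↦ ∫ z, f z ∂κ x) μ := by
  rw [comp_eq_comp_const_apply] at hf
  simpa only [Kernel.const_apply] using hf.integral_comp

end MeasureTheory.Measure

namespace ProbabilityTheory.Kernel.Invariant

variable {α E : Type*} {mα : MeasurableSpace α} [NormedAddCommGroup E] [NormedSpace ℝ E]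
  {μ : Measure α} {κ : Kernel α α} {f : α → E}

theorem integral_eq_integral_integral [SFinite μ] [IsSFiniteKernel κ] (h : Invariant κ μ)
    (hf : Integrable f μ) : ∫ z, f z ∂μ = ∫ x, ∫ z, f z ∂κ x ∂μ := by
  rw [← h.def] at hf
  conv_lhs => rw [← h.def]
  exact Measure.integral_comp hf

theorem integrable_integral (h : Invariant κ μ) (hf : Integrable f μ) :
    Integrable (fun x ↦ ∫ z, f z ∂κ x) μ := by
  rw [← h.def] at hf
  exact Measure.integrable_integral_of_integrable_comp hf

end ProbabilityTheory.Kernel.Invariant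

theorem abs_sub_integral_le_integral {α : Type*} {mα : MeasurableSpace α} {μ : Measure α}
    [IsProbabilityMeasure μ] {g b : α → ℝ} (a : ℝ) (hg : Integrable g μ) (hb : Integrable b μ)
    (hle : ∀ y, |a - g y| ≤ b y) :
    |a - ∫ y, g y ∂μ| ≤ ∫ y, b y ∂μ :=
  calc |a - ∫ y, g y ∂μ| = |∫ y, (a - g y) ∂μ| := by
        rw [integral_sub (integrable_const a) hg, integral_const, probReal_univ, one_smul]
    _ ≤ ∫ y, |a - g y| ∂μ := abs_integral_le_integral_abs
    _ ≤ ∫ y, b y ∂μ := integral_mono ((integrable_const a).sub hg).abs hb hle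

section

variable {S : Type*} [MeasurableSpace S]

theorem kiter_eq_pow (κ : Kernel S S) (n : ℕ) (x : S) : kiter κ n x = (κ ^ n) x := by
  induction n with
  | zero => rfl
  | succ n ih => rw [kiter, pow_succ', ih]; rfl

theorem invariant_iff_kernel_invariant (κ : Kernel S S) (μ : Measure S) :
    Invariant κ μ ↔ Kernel.Invariant κ μ := by
  rw [Invariant, Kernel.Invariant, Measure.ext_iff]
  exact forall₂_congr fun A hA ↦ by rw [Measure.bind_apply hA κ.aemeasurable]

end

theorem stmt11_general
    {S : Type*} [MetricSpace S]
    [MeasurableSpace S] [BorelSpace S]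
    (κ : Kernel S S) [IsMarkovKernel κ]
    (c θ : ℝ)
    (hcontr : ∀ (φ : S → ℝ) (K : NNReal), (∃ Cb : ℝ, ∀ z, |φ z| ≤ Cb) →
      LipschitzWith K φ → ∀ (n : ℕ) (x y : S),
        |(∫ z, φ z ∂(kiter κ n x)) - ∫ z, φ z ∂(kiter κ n y)| ≤
          c * θ ^ n * K * dist x y)
    (μ : Measure S) [IsProbabilityMeasure μ] (hinv : Invariant κ μ)
    (x : S) (hint : Integrable (fun y => dist x y) μ) :
    ∀ (φ : S → ℝ) (K : NNReal), (∃ Cb : ℝ, ∀ z, |φ z| ≤ Cb) → LipschitzWith K φ →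
      ∀ n : ℕ,
        |(∫ z, φ z ∂(kiter κ n x)) - ∫ z, φ z ∂μ| ≤
          c * θ ^ n * K * ∫ y, dist x y ∂μ := by
  rintro φ K ⟨C, hC⟩ hLip n
  have hφ : Integrable φ μ := .of_bound hLip.continuous.aestronglyMeasurable C (.of_forall hC)
  have hinvn := ((invariant_iff_kernel_invariant κ μ).1 hinv).pow n
  simp only [kiter_eq_pow] at hcontr ⊢
  rw [hinvn.integral_eq_integral_integral hφ, ← integral_const_mul]
  exact abs_sub_integral_le_integral _ (hinvn.integrable_integral hφ)
    (hint.const_mul _) (hcontr φ K ⟨C, hC⟩ hLip n x)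

/-- Under the contraction assumption of Statement 10, if `μ` is an
invariant probability measure with `∫ d(x,y) μ(dy) < ∞`, then for every bounded Lipschitz
`φ` and every `n`, `|∫ φ d(κⁿ(x)) − ∫ φ dμ| ≤ c·θⁿ·Lip(φ)·∫ d(x,y) μ(dy)`. -/
theorem stmt11
    {S : Type*} [MetricSpace S] [CompleteSpace S] [TopologicalSpace.SeparableSpace S]
    [MeasurableSpace S] [BorelSpace S]
    (κ : Kernel S S) [IsMarkovKernel κ]
    (c θ : ℝ) (hc : 0 ≤ c) (hθ : θ ∈ Set.Ioo (0 : ℝ) 1)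
    (hcontr : ∀ (φ : S → ℝ) (K : NNReal), (∃ Cb : ℝ, ∀ z, |φ z| ≤ Cb) →
      LipschitzWith K φ → ∀ (n : ℕ) (x y : S),
        |(∫ z, φ z ∂(kiter κ n x)) - ∫ z, φ z ∂(kiter κ n y)| ≤
          c * θ ^ n * K * dist x y)
    (μ : Measure S) [IsProbabilityMeasure μ] (hinv : Invariant κ μ)
    (x : S) (hint : Integrable (fun y => dist x y) μ) :
    ∀ (φ : S → ℝ) (K : NNReal), (∃ Cb : ℝ, ∀ z, |φ z| ≤ Cb) → LipschitzWith K φ →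
      ∀ n : ℕ,
        |(∫ z, φ z ∂(kiter κ n x)) - ∫ z, φ z ∂μ| ≤
          c * θ ^ n * K * ∫ y, dist x y ∂μ :=
  stmt11_general κ c θ hcontr μ hinv x hint
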